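/- (ε-termination criterion of RM-BR DO.) Let A : S₁ × S₂ → ℝ be the payoff matrix of a finite two-player zero-sum game, ε ≥ 0, and T₁ ⊆ S₁, T₂ ⊆ S₂ nonempty. Let x^r ∈ Δ(T₁) attain v₁ := max_{x∈Δ(T₁)} min_{y∈Δ(S₂)} v(x,y) and let y^r ∈ Δ(T₂) attain v₂ := min_{y∈Δ(T₂)} max_{x∈Δ(S₁)} v(x,y). If v₂ − v₁ ≤ ε, then (x^r, y^r) is an ε-Nash equilibrium of the full game: v(x, y^r) ≤ v(x^r, y^r) + ε for all x ∈ Δ(S₁) and v(x^r, y) ≥ v(x^r, y^r) − ε for all y ∈ Δ(S₂). -/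
import Mathlib


open scoped BigOperators

/-- The set of mixed strategies over a finite action set `S`. -/
def mixed (S : Type*) [Fintype S] : Set (S → ℝ) :=
  {x | (∀ a, 0 ≤ x a) ∧ ∑ a, x a = 1}

/-- Mixed strategies supported in a subset `T` of the action set. -/
def mixedOn {S : Type*} [Fintype S] (T : Set S) : Set (S → ℝ) :=
  {x | x ∈ mixed S ∧ ∀ a ∉ T, x a = 0}

/-- Expected payoff to player 1: `v(x,y) = ∑ x(a) A(a,b) y(b)`. -/
def payoff {S₁ S₂ : Type*} [Fintype S₁] [Fintype S₂]
    (A : S₁ → S₂ → ℝ) (x : S₁ → ℝ) (y : S₂ → ℝ) : ℝ :=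
  ∑ a, ∑ b, x a * A a b * y b

/-- `min_{y ∈ Δ(S₂)} v(x,y)`, the value of player 1's strategy `x`
against a best-responding opponent. -/
noncomputable def minVal {S₁ S₂ : Type*} [Fintype S₁] [Fintype S₂]
    (A : S₁ → S₂ → ℝ) (x : S₁ → ℝ) : ℝ :=
  sInf (payoff A x '' mixed S₂)

/-- `max_{x ∈ Δ(S₁)} v(x,y)`, the value of a best response against
player 2's strategy `y`. -/
noncomputable def maxVal {S₁ S₂ : Type*} [Fintype S₁] [Fintype S₂]
    (A : S₁ → S₂ → ℝ) (y : S₂ → ℝ) : ℝ :=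
  sSup ((fun x => payoff A x y) '' mixed S₁)

/-- Exploitability of the profile `(x,y)`:
`e(x,y) = max_{x'} v(x',y) - min_{y'} v(x,y')`. -/
noncomputable def exploit {S₁ S₂ : Type*} [Fintype S₁] [Fintype S₂]
    (A : S₁ → S₂ → ℝ) (x : S₁ → ℝ) (y : S₂ → ℝ) : ℝ :=
  maxVal A y - minVal A x

/-- The mixed strategy placing probability 1 on the pure strategy `a`. -/
def pureStrat {S : Type*} [DecidableEq S] (a : S) : S → ℝ :=
  fun b => if b = a then 1 else 0


lemma mixed_le_one {S : Type*} [Fintype S] {x : S → ℝ} (hx : x ∈ mixed S) (a : S) :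
    x a ≤ 1 := by
  have := Finset.single_le_sum (f := x) (fun i _ => hx.1 i) (Finset.mem_univ a)
  simpa [hx.2] using this

lemma payoff_abs_le {S₁ S₂ : Type*} [Fintype S₁] [Fintype S₂]
    (A : S₁ → S₂ → ℝ) {x : S₁ → ℝ} {y : S₂ → ℝ}
    (hx : x ∈ mixed S₁) (hy : y ∈ mixed S₂) :
    |payoff A x y| ≤ ∑ a, ∑ b, |A a b| := by
  calc |payoff A x y| ≤ ∑ a, ∑ b, |x a * A a b * y b| := by
        refine (Finset.abs_sum_le_sum_abs _ _).trans ?_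
        exact Finset.sum_le_sum fun a _ => Finset.abs_sum_le_sum_abs _ _
    _ ≤ ∑ a, ∑ b, |A a b| := by
        refine Finset.sum_le_sum fun a _ => Finset.sum_le_sum fun b _ => ?_
        rw [abs_mul, abs_mul, abs_of_nonneg (hx.1 a), abs_of_nonneg (hy.1 b)]
        calc x a * |A a b| * y b ≤ 1 * |A a b| * 1 := by
              apply mul_le_mul (mul_le_mul (mixed_le_one hx a) le_rfl (abs_nonneg _) zero_le_one)
                (mixed_le_one hy b) (hy.1 b)
              positivity
          _ = |A a b| := by ring

lemma minVal_le_payoff {S₁ S₂ : Type*} [Fintype S₁] [Fintype S₂]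
    (A : S₁ → S₂ → ℝ) {x : S₁ → ℝ} {y : S₂ → ℝ}
    (hx : x ∈ mixed S₁) (hy : y ∈ mixed S₂) :
    minVal A x ≤ payoff A x y := by
  apply csInf_le
  · exact ⟨-(∑ a, ∑ b, |A a b|), by
      rintro _ ⟨y', hy', rfl⟩
      exact neg_le_of_abs_le (payoff_abs_le A hx hy')⟩
  · exact ⟨y, hy, rfl⟩

lemma payoff_le_maxVal {S₁ S₂ : Type*} [Fintype S₁] [Fintype S₂]
    (A : S₁ → S₂ → ℝ) {x : S₁ → ℝ} {y : S₂ → ℝ}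
    (hx : x ∈ mixed S₁) (hy : y ∈ mixed S₂) :
    payoff A x y ≤ maxVal A y := by
  apply le_csSup
  · exact ⟨∑ a, ∑ b, |A a b|, by
      rintro _ ⟨x', hx', rfl⟩
      exact le_of_abs_le (payoff_abs_le A hx' hy)⟩
  · exact ⟨x, hx, rfl⟩

/-- ε-termination criterion of RM-BR DO. -/
theorem rmbr_do_eps_termination
    {S₁ S₂ : Type*} [Fintype S₁] [Fintype S₂] [Nonempty S₁] [Nonempty S₂]
    (A : S₁ → S₂ → ℝ) (ε : ℝ) (hε : 0 ≤ ε)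
    (T₁ : Set S₁) (T₂ : Set S₂) (hT₁ : T₁.Nonempty) (hT₂ : T₂.Nonempty)
    (xr : S₁ → ℝ) (yr : S₂ → ℝ)
    -- xr attains v₁ = max_{x∈Δ(T₁)} min_{y∈Δ(S₂)} v(x,y)
    (hxr : xr ∈ mixedOn T₁) (hxrmax : ∀ x ∈ mixedOn T₁, minVal A x ≤ minVal A xr)
    -- yr attains v₂ = min_{y∈Δ(T₂)} max_{x∈Δ(S₁)} v(x,y)
    (hyr : yr ∈ mixedOn T₂) (hyrmin : ∀ y ∈ mixedOn T₂, maxVal A yr ≤ maxVal A y)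
    -- v₂ − v₁ ≤ ε
    (hgap : sInf (maxVal A '' mixedOn T₂) - sSup (minVal A '' mixedOn T₁) ≤ ε) :
    (∀ x ∈ mixed S₁, payoff A x yr ≤ payoff A xr yr + ε) ∧
      (∀ y ∈ mixed S₂, payoff A xr yr - ε ≤ payoff A xr y) := by
  have hxm : xr ∈ mixed S₁ := hxr.1
  have hym : yr ∈ mixed S₂ := hyr.1
  have hinf : sInf (maxVal A '' mixedOn T₂) = maxVal A yr := by
    apply le_antisymm
    · exact csInf_le ⟨maxVal A yr, by rintro _ ⟨y, hy, rfl⟩; exact hyrmin y hy⟩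
        ⟨yr, hyr, rfl⟩
    · exact le_csInf ⟨_, ⟨yr, hyr, rfl⟩⟩ (by rintro _ ⟨y, hy, rfl⟩; exact hyrmin y hy)
  have hsup : sSup (minVal A '' mixedOn T₁) = minVal A xr := by
    apply le_antisymm
    · exact csSup_le ⟨_, ⟨xr, hxr, rfl⟩⟩ (by rintro _ ⟨x, hx, rfl⟩; exact hxrmax x hx)
    · exact le_csSup ⟨minVal A xr, by rintro _ ⟨x, hx, rfl⟩; exact hxrmax x hx⟩
        ⟨xr, hxr, rfl⟩
  rw [hinf, hsup] at hgap
  have h1 : minVal A xr ≤ payoff A xr yr := minVal_le_payoff A hxm hym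
  have h2 : payoff A xr yr ≤ maxVal A yr := payoff_le_maxVal A hxm hym
  constructor
  · intro x hx
    have := payoff_le_maxVal A hx hym
    linarith
  · intro y hy
    have := minVal_le_payoff A hxm hy
    linarith
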